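/- Let Y be a nonnegatively graded chain complex of abelian groups and let DK(Y)_n = ⊕_α Y_k (sum over injective order maps α : [k] → [n] with α(0)=0). An element x ∈ DK(Y)_n lies in the kernel of d_i (for i > 0) if and only if π_α(x) = 0 for all indices α not containing i in their image. -/

import Mathlib

open CategoryTheory SimplexCategory

variable (Y : ℕ → Type) [∀ k, AddCommGroup (Y k)]

/-- Indices of the DK direct sum: injective order-preserving maps `[k] → [n]` with `α 0 = 0`. -/
def DKIdx (n : ℕ) : Type :=
  {p : Σ k : ℕ, SimplexCategory.mk k ⟶ SimplexCategory.mk n //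
    Function.Injective p.2.toOrderHom ∧ p.2.toOrderHom 0 = 0}

/-- The `n`-simplex abelian group `DK(Y)_n = ⊕_α Y_k`. -/
def DK (n : ℕ) : Type := ∀ p : DKIdx n, Y p.1.1

instance (n : ℕ) : AddCommGroup (DK Y n) :=
  inferInstanceAs (AddCommGroup (∀ p : DKIdx n, Y p.1.1))

/-- Projection `π_γ`, with the convention `π_γ = 0` for `γ` not injective (or not 0-preserving). -/
def DKproj {n l : ℕ} (γ : SimplexCategory.mk l ⟶ SimplexCategory.mk n) (x : DK Y n) : Y l :=
  if h : Function.Injective γ.toOrderHom ∧ γ.toOrderHom 0 = 0 then x ⟨⟨l, γ⟩, h⟩ else 0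

/-- Pullback `θ^*` along an order map, defined by `π_β θ^* = π_{θ∘β}`. -/
def DKpull {m n : ℕ} (θ : SimplexCategory.mk m ⟶ SimplexCategory.mk n) (x : DK Y n) : DK Y m :=
  fun p => DKproj Y (p.1.2 ≫ θ) x

/-- The map `θ' : [m+1] → [n+1]`, `θ'(0)=0`, `θ'(i+1)=θ(i)+1`, on monotone maps. -/
def primeFun {m n : ℕ} (θ : Fin (m + 1) →o Fin (n + 1)) : Fin (m + 2) →o Fin (n + 2) where
  toFun i := if h : (i : ℕ) = 0 then 0 else
    ⟨((θ ⟨(i : ℕ) - 1, by have := i.isLt; omega⟩ : Fin (n + 1)) : ℕ) + 1, by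
      have := (θ ⟨(i : ℕ) - 1, by have := i.isLt; omega⟩).isLt; omega⟩
  monotone' := by
    intro a b hab
    dsimp only
    by_cases ha : (a : ℕ) = 0
    · by_cases hb : (b : ℕ) = 0 <;> simp [ha, hb, Fin.le_def]
    · have hb : (b : ℕ) ≠ 0 := by have := Fin.le_def.mp hab; omega
      rw [dif_neg ha, dif_neg hb]
      have h2 : (⟨(a : ℕ) - 1, by have := a.isLt; omega⟩ : Fin (m + 1)) ≤
          ⟨(b : ℕ) - 1, by have := b.isLt; omega⟩ := by
        have := Fin.le_def.mp hab; simp [Fin.le_def]; omega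
      have := θ.monotone h2
      simp only [Fin.le_def] at this ⊢
      omega

/-- The map `θ' : [m+1] ⟶ [n+1]` in the simplex category. -/
def DKprime {m n : ℕ} (θ : SimplexCategory.mk m ⟶ SimplexCategory.mk n) :
    SimplexCategory.mk (m + 1) ⟶ SimplexCategory.mk (n + 1) :=
  SimplexCategory.mkHom (primeFun θ.toOrderHom)

/-- The zeroth face of `DK(Y)`:
`π_β d_0 = ∂ π_{β'} − Σ_{i=1}^{l+1} (−1)^i π_{β' δ_i}`. -/
def DKd0 (D : ∀ k, Y (k + 1) →+ Y k) {n : ℕ} (x : DK Y (n + 1)) : DK Y n :=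
  fun p =>
    D p.1.1 (DKproj Y (DKprime p.1.2) x) -
      ∑ j : Fin (p.1.1 + 1), ((-1 : ℤ) ^ ((j : ℕ) + 1)) •
        DKproj Y (SimplexCategory.δ j.succ ≫ DKprime p.1.2) x

/-- The degeneracy `u_j` of `DK(Y)`, `π_β u_j = π_{υ_j β}`. -/
def DKu {n : ℕ} (j : Fin (n + 1)) (x : DK Y n) : DK Y (n + 1) :=
  DKpull Y (SimplexCategory.σ j) x

/-- The subgroup spanned by the degenerate simplices. -/
def Dsub : ∀ n, AddSubgroup (DK Y n)
  | 0 => ⊥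
  | (n + 1) => AddSubgroup.closure (⋃ j : Fin (n + 1), Set.range (DKu Y j))

/-- The initial inclusion `σ_k : [k] → [n]`. -/
def initialIncl (k n : ℕ) (h : k ≤ n) : SimplexCategory.mk k ⟶ SimplexCategory.mk n :=
  SimplexCategory.mkHom
    ⟨fun i => ⟨(i : ℕ), by have := i.isLt; omega⟩,
     fun a b hab => by simp only [Fin.le_def] at hab ⊢; omega⟩

/-- The final inclusion `τ_k : [k] → [n]`, `i ↦ i + (n − k)`. -/
def finalIncl (k n : ℕ) (h : k ≤ n) : SimplexCategory.mk k ⟶ SimplexCategory.mk n :=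
  SimplexCategory.mkHom
    ⟨fun i => ⟨(i : ℕ) + (n - k), by have := i.isLt; omega⟩,
     fun a b hab => by simp only [Fin.le_def] at hab ⊢; omega⟩

lemma injective_and_map_zero_comp_δ_iff {k n : ℕ} {i : Fin (n + 2)} (hi : i ≠ 0)
    (β : SimplexCategory.mk k ⟶ SimplexCategory.mk n) :
    (Function.Injective (β ≫ δ i).toOrderHom ∧ (β ≫ δ i).toOrderHom 0 = 0) ↔
      (Function.Injective β.toOrderHom ∧ β.toOrderHom 0 = 0) :=
  (Fin.succAbove_right_injective.of_comp_iff _).and (Fin.succAbove_eq_zero_iff hi)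

theorem stmt2 (n : ℕ) (i : Fin (n + 2)) (hi : i ≠ 0) (x : DK Y (n + 1)) :
    DKpull Y (SimplexCategory.δ i) x = 0 ↔
      ∀ p : DKIdx (n + 1), (∀ a, p.1.2.toOrderHom a ≠ i) → x p = 0 := by
  constructor
  · rintro h ⟨⟨k, α⟩, hα⟩ hαi
    have hfac : factor_δ α i ≫ δ i = α := factor_δ_spec α i hαi
    have hβ := (injective_and_map_zero_comp_δ_iff hi (factor_δ α i)).1 (by rw [hfac]; exact hα)
    have hαx : DKproj Y (factor_δ α i ≫ δ i) x = 0 := congrFun h ⟨⟨k, factor_δ α i⟩, hβ⟩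
    rwa [hfac, DKproj, dif_pos hα] at hαx
  · intro h
    funext ⟨⟨k, β⟩, hβ⟩
    have hβi := (injective_and_map_zero_comp_δ_iff hi β).2 hβ
    exact (dif_pos hβi).trans (h _ fun a => Fin.succAbove_ne i _)
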